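/- Let q be an odd prime power with q > 16 and k = q − 2. Then u ∈ 𝔽_q^q is a deep hole of TRS_{q-2}(𝔽_q, θ) if and only if u = u_f for some f(x) = w_0 x^{q-1} + w_1 x^{q-2} + g(x) with g ∈ S_{q-2,θ} and w_0, w_1 ∈ 𝔽_q satisfying: either w_0 = 0 and w_1 ≠ 0, or w_0 ≠ 0 and w_0^2 − 4 w_0 w_1 θ is a nonzero non-square in 𝔽_q (i.e., η(w_0^2 − 4 w_0 w_1 θ) = −1 for the quadratic character η of 𝔽_q). -/

import Mathlib

open Polynomial Finset

/-- The set `S_{k,θ}` of twisted polynomials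
`Σ_{i=0}^{k-2} f_i x^i + f_{k-1}(x^{k-1} + θ x^k)`. -/
def Sset (F : Type*) [Field F] (k : ℕ) (θ : F) : Set (Polynomial F) :=
  {p | ∃ f : ℕ → F, p = (∑ i ∈ Finset.range (k - 1), Polynomial.C (f i) * Polynomial.X ^ i)
        + Polynomial.C (f (k - 1)) * (Polynomial.X ^ (k - 1) + Polynomial.C θ * Polynomial.X ^ k)}

/-- The twisted Reed–Solomon code `TRS_k(A, θ)` for the evaluation sequence `α`. -/
def TRS {F : Type*} [Field F] {n : ℕ} (α : Fin n → F) (k : ℕ) (θ : F) : Set (Fin n → F) :=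
  {v | ∃ p ∈ Sset F k θ, v = fun j => p.eval (α j)}

/-- The (Hamming) error distance `d(u, C)` from a word `u` to a code `C`. -/
noncomputable def distTo {F : Type*} [DecidableEq F] {n : ℕ} (u : Fin n → F)
    (C : Set (Fin n → F)) : ℕ :=
  sInf {d | ∃ c ∈ C, hammingDist u c = d}

/-- The covering radius `ρ(C) = max_u d(u, C)` of a code `C`. -/
noncomputable def covRad {F : Type*} [DecidableEq F] {n : ℕ} (C : Set (Fin n → F)) : ℕ :=
  sSup {d | ∃ u, distTo u C = d}

/-- `u` is a deep hole of `C` if `d(u, C) = ρ(C)`. -/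
def IsDeepHole {F : Type*} [DecidableEq F] {n : ℕ} (C : Set (Fin n → F)) (u : Fin n → F) :
    Prop :=
  distTo u C = covRad C

/-- The column vector `c_{r,θ}(a) = (1, a, …, a^{r-2}, a^{r-1} - θ a^r)ᵀ ∈ 𝔽_q^r`. -/
def crv (F : Type*) [Field F] (r : ℕ) (θ a : F) : Fin r → F :=
  fun i => if (i : ℕ) = r - 1 then a ^ (r - 1) - θ * a ^ r else a ^ (i : ℕ)

/-- The parity-check matrix `H` whose `j`-th column is `c_{r,θ}(α_j)`. -/
def Hmat {F : Type*} [Field F] {n : ℕ} (r : ℕ) (θ : F) (α : Fin n → F) :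
    Matrix (Fin r) (Fin n) F :=
  Matrix.of fun i j => crv F r θ (α j) i

/-!
The code `TRS_{q-2}(𝔽_q, θ)` has redundancy two: since `∑_{a ∈ 𝔽_q} a ^ j` vanishes for
`j < 2(q - 1)` unless `j = q - 1`, it is the kernel of the `2 × q` matrix with columns
`(1, a - θ a²)`, `a ∈ 𝔽_q`. The columns for `a = 0` and for some `a = b` with `b - θ b² ≠ 0` span
`𝔽_q²`, so the covering radius is two, and a word is within distance one of the code iff its
syndrome is a multiple of a single column. The word `u_f`, `f = w₀ x^{q-1} + w₁ x^{q-2} + g`, has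
syndrome `(-w₀, -w₁)`, so it is a deep hole iff `w₁ = w₀ (a - θ a²)` has no solution `a`; for
`w₀ ≠ 0` this is a quadratic equation in `a` with discriminant `w₀² - 4 w₀ w₁ θ`.
-/

open Function Matrix

namespace FiniteField

variable {K : Type*} [Field K] [Fintype K]

local notation "q" => Fintype.card K

theorem sum_pow_eq_sum_units_pow [DecidableEq K] {j : ℕ} (hj : 0 < j) :
    ∑ x : K, x ^ j = ∑ x : Kˣ, (x : K) ^ j := by
  rw [← Finset.sum_subset (Finset.subset_univ (univ.map ⟨((↑) : Kˣ → K), Units.val_injective⟩))]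
  · simp
  · intro x _ hx
    have hx0 : x = 0 := by
      by_contra h
      exact hx (Finset.mem_map.mpr ⟨Units.mk0 x h, mem_univ _, rfl⟩)
    simp [hx0, hj.ne']

theorem sum_pow_of_lt_two_mul {j : ℕ} (hj : j < 2 * (q - 1)) :
    ∑ x : K, x ^ j = if j = q - 1 then -1 else 0 := by
  classical
  rcases lt_or_ge j (q - 1) with hlt | hge
  · rw [sum_pow_lt_card_sub_one (K := K) j hlt, if_neg hlt.ne]
  have hq : 1 < q := Fintype.one_lt_card
  rw [sum_pow_eq_sum_units_pow (by omega), sum_pow_units]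
  congr 1
  refine propext ⟨fun ⟨m, hm⟩ => ?_, fun h => h ▸ dvd_rfl⟩
  subst hm
  obtain rfl : m = 1 := by
    have h1 : 0 < m := Nat.pos_of_ne_zero (by rintro rfl; omega)
    have h2 : m < 2 := Nat.lt_of_mul_lt_mul_left (by rwa [mul_comm 2] at hj)
    omega
  rw [mul_one]

theorem sum_pow_mul_eval {p : K[X]} (hp : p.natDegree < q) {m : ℕ} (hm : m < q - 1) :
    ∑ x : K, x ^ m * p.eval x = -p.coeff (q - 1 - m) := by
  calc ∑ x : K, x ^ m * p.eval x
      = ∑ i ∈ range q, p.coeff i * ∑ x : K, x ^ (i + m) := by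
        simp_rw [eval_eq_sum_range' hp, Finset.mul_sum, pow_add]
        rw [Finset.sum_comm]
        exact Finset.sum_congr rfl fun i _ => Finset.sum_congr rfl fun x _ => by ring
    _ = -p.coeff (q - 1 - m) := by
        rw [Finset.sum_congr rfl fun i hi =>
          by rw [sum_pow_of_lt_two_mul (by rw [Finset.mem_range] at hi; omega)]]
        rw [Finset.sum_eq_single (q - 1 - m)]
        · rw [if_pos (by omega), mul_neg_one]
        · intro i _ hi
          rw [if_neg (by omega), mul_zero]
        · intro h
          exact absurd (Finset.mem_range.mpr (by omega)) h

end FiniteField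

section Hamming

variable {ι β : Type*} [Fintype ι] [DecidableEq β]

theorem hammingNorm_add_le [AddGroup β] (x y : ι → β) :
    hammingNorm (x + y) ≤ hammingNorm x + hammingNorm y :=
  calc hammingNorm (x + y) = hammingDist 0 (x + y) := by rw [hammingDist_zero_left]
    _ ≤ hammingDist 0 x + hammingDist x (x + y) := hammingDist_triangle _ _ _
    _ = hammingNorm x + hammingNorm y := by
      rw [hammingDist_eq_hammingNorm x, neg_add_cancel_left, hammingDist_zero_left]

variable [DecidableEq ι] [Zero β]

theorem hammingNorm_single_le_one (j : ι) (x : β) : hammingNorm (Pi.single j x : ι → β) ≤ 1 := by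
  refine (Finset.card_le_card fun i hi => ?_).trans (Finset.card_singleton j).le
  by_contra hij
  simp [Pi.single_eq_of_ne (Finset.notMem_singleton.mp hij)] at hi

theorem exists_eq_single_of_hammingNorm_le_one [Nonempty ι] {e : ι → β}
    (he : hammingNorm e ≤ 1) : ∃ j x, e = Pi.single j x := by
  by_cases h0 : e = 0
  · exact ⟨Classical.arbitrary ι, 0, by rw [h0, Pi.single_zero]⟩
  obtain ⟨j, hj⟩ := Function.ne_iff.mp h0
  refine ⟨j, e j, funext fun i => ?_⟩
  rcases eq_or_ne i j with rfl | hij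
  · rw [Pi.single_eq_same]
  · rw [Pi.single_eq_of_ne hij]
    by_contra hi
    exact hij (Finset.card_le_one.mp he i (by simpa using hi) j (by simpa using hj))

end Hamming

theorem distTo_ker_le_iff {R : Type*} [Ring R] [DecidableEq R] {m n : ℕ}
    (H : Matrix (Fin m) (Fin n) R) (v : Fin n → R) (d : ℕ) :
    distTo v {c | H *ᵥ c = 0} ≤ d ↔ ∃ e, hammingNorm e ≤ d ∧ H *ᵥ e = H *ᵥ v := by
  constructor
  · intro hd
    obtain ⟨c, hc, hvc⟩ := Nat.sInf_mem (s := {d | ∃ c ∈ {c | H *ᵥ c = 0}, hammingDist v c = d})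
      ⟨_, 0, by simp, rfl⟩
    refine ⟨v - c, ?_, ?_⟩
    · rw [hammingDist_comm, hammingDist_eq_hammingNorm, neg_add_eq_sub] at hvc
      rw [hvc]
      exact hd
    · rw [mulVec_sub, Set.mem_ofPred_eq.mp hc, sub_zero]
  · rintro ⟨e, he, hHe⟩
    refine (Nat.sInf_le (show hammingDist v (v - e) ∈ {d | ∃ c ∈ {c | H *ᵥ c = 0},
      hammingDist v c = d} from ⟨v - e, ?_, rfl⟩)).trans ?_
    · rw [Set.mem_ofPred_eq, mulVec_sub, hHe, sub_self]
    · rwa [hammingDist_comm, hammingDist_eq_hammingNorm, neg_add_eq_sub, sub_sub_cancel]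

theorem covRad_eq_of_distTo_le {β : Type*} [DecidableEq β] {n r : ℕ} {C : Set (Fin n → β)}
    (hle : ∀ v, distTo v C ≤ r) {v₀ : Fin n → β} (hv₀ : distTo v₀ C = r) : covRad C = r := by
  have hbdd : ∀ d ∈ {d | ∃ v, distTo v C = d}, d ≤ r := by
    rintro _ ⟨v, rfl⟩
    exact hle v
  exact le_antisymm (csSup_le ⟨r, v₀, hv₀⟩ hbdd) (le_csSup ⟨r, hbdd⟩ ⟨v₀, hv₀⟩)

section

variable {F : Type*} [Field F]

theorem exists_eq_mul_sub_mul_sq_iff_isSquare (h2 : (2 : F) ≠ 0) {w₀ : F} (hw₀ : w₀ ≠ 0)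
    (w₁ θ : F) : (∃ a, w₁ = w₀ * (a - θ * a ^ 2)) ↔ IsSquare (w₀ ^ 2 - 4 * w₀ * w₁ * θ) := by
  constructor
  · rintro ⟨a, rfl⟩
    exact ⟨w₀ * (1 - 2 * θ * a), by ring⟩
  · rintro ⟨s, hs⟩
    by_cases hθ : θ = 0
    · exact ⟨w₁ / w₀, by field_simp; simp [hθ]⟩
    · refine ⟨(w₀ - s) / (2 * θ * w₀), ?_⟩
      field_simp
      linear_combination -hs

theorem not_exists_eq_mul_sub_mul_sq_iff (h2 : (2 : F) ≠ 0) (w₀ w₁ θ : F) :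
    (¬∃ a, w₁ = w₀ * (a - θ * a ^ 2)) ↔ (w₀ = 0 ∧ w₁ ≠ 0) ∨
      (w₀ ≠ 0 ∧ w₀ ^ 2 - 4 * w₀ * w₁ * θ ≠ 0 ∧ ¬IsSquare (w₀ ^ 2 - 4 * w₀ * w₁ * θ)) := by
  rcases eq_or_ne w₀ 0 with rfl | hw₀
  · simp
  · rw [exists_eq_mul_sub_mul_sq_iff_isSquare h2 hw₀]
    have hsq : ¬IsSquare (w₀ ^ 2 - 4 * w₀ * w₁ * θ) → w₀ ^ 2 - 4 * w₀ * w₁ * θ ≠ 0 :=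
      fun h h0 => h (h0 ▸ IsSquare.zero)
    tauto

theorem mem_Sset_iff {k : ℕ} (hk : 1 ≤ k) {θ : F} {g : F[X]} :
    g ∈ Sset F k θ ↔ g.natDegree ≤ k ∧ g.coeff k = θ * g.coeff (k - 1) := by
  obtain ⟨m, rfl⟩ : ∃ m, k = m + 1 := ⟨k - 1, by omega⟩
  simp only [Sset, Set.mem_ofPred_eq, add_tsub_cancel_right]
  constructor
  · rintro ⟨f, rfl⟩
    refine ⟨natDegree_le_iff_coeff_eq_zero.mpr fun j hj => ?_, ?_⟩
    · simp [coeff_X_pow, finsetSum_coeff, show ¬j < m by omega, show j ≠ m by omega,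
        show j ≠ m + 1 by omega]
    · simp [coeff_X_pow, finsetSum_coeff, mul_comm θ]
  · rintro ⟨hdeg, htop⟩
    refine ⟨g.coeff, ?_⟩
    conv_lhs => rw [g.as_sum_range_C_mul_X_pow' (Nat.lt_succ_of_le hdeg)]
    rw [Finset.sum_range_succ, Finset.sum_range_succ, htop, C_mul]
    ring

theorem exists_natDegree_lt_eval_eq {n : ℕ} (hn : n ≠ 0) {α : Fin n → F} (hα : Injective α)
    (v : Fin n → F) : ∃ p : F[X], p.natDegree < n ∧ v = fun j => p.eval (α j) := by
  classical
  have hinj : Set.InjOn α (univ : Finset (Fin n)) := hα.injOn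
  refine ⟨Lagrange.interpolate univ α v, ?_, ?_⟩
  · have hdeg := Lagrange.degree_interpolate_lt v hinj
    rw [card_univ, Fintype.card_fin] at hdeg
    rcases eq_or_ne (Lagrange.interpolate univ α v) 0 with h0 | h0
    · rw [h0, natDegree_zero]
      exact Nat.pos_of_ne_zero hn
    · exact (natDegree_lt_iff_degree_lt h0).mpr hdeg
  · funext j
    exact (Lagrange.eval_interpolate_at_node v hinj (mem_univ j)).symm

theorem crv_two (θ a : F) : crv F 2 θ a = ![1, a - θ * a ^ 2] := by
  ext i
  fin_cases i <;> simp [crv]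

theorem Hmat_mulVec_single {n : ℕ} (r : ℕ) (θ : F) (α : Fin n → F) (j : Fin n) (x : F) :
    Hmat r θ α *ᵥ Pi.single j x = x • crv F r θ (α j) := by
  ext i
  simp [Hmat, mul_comm]

theorem Hmat_two_mulVec {n : ℕ} (θ : F) (α : Fin n → F) (v : Fin n → F) :
    Hmat 2 θ α *ᵥ v = ![∑ j, v j, ∑ j, (α j - θ * α j ^ 2) * v j] := by
  ext i
  fin_cases i <;> simp [Hmat, mulVec, dotProduct, crv_two]

section FullLength

variable [Fintype F] {θ : F} {α : Fin (Fintype.card F) → F}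

local notation "q" => Fintype.card F

theorem Hmat_two_mulVec_eval (hα : Bijective α) (hq : 4 ≤ q) {p : F[X]} (hp : p.natDegree < q) :
    Hmat 2 θ α *ᵥ (fun j => p.eval (α j)) =
      ![-p.coeff (q - 1), θ * p.coeff (q - 3) - p.coeff (q - 2)] := by
  have hsum (m : ℕ) (hm : m < q - 1) : ∑ j, α j ^ m * p.eval (α j) = -p.coeff (q - 1 - m) :=
    (hα.sum_comp fun x => x ^ m * p.eval x).trans (FiniteField.sum_pow_mul_eval hp hm)
  rw [Hmat_two_mulVec]
  congr 2
  · simpa using hsum 0 (by omega)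
  · simp_rw [sub_mul, Finset.sum_sub_distrib, mul_assoc, ← Finset.mul_sum]
    have h1 := hsum 1 (by omega)
    simp only [pow_one] at h1
    rw [h1, hsum 2 (by omega), show q - 1 - 1 = q - 2 by omega, show q - 1 - 2 = q - 3 by omega]
    ring

theorem Hmat_two_mulVec_eval_add (hα : Bijective α) (hq : 4 ≤ q) (w₀ w₁ : F) {g : F[X]}
    (hg : g ∈ Sset F (q - 2) θ) :
    Hmat 2 θ α *ᵥ (fun j => (C w₀ * X ^ (q - 1) + C w₁ * X ^ (q - 2) + g).eval (α j)) =
      ![-w₀, -w₁] := by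
  obtain ⟨hdeg, htop⟩ := (mem_Sset_iff (by omega)).mp hg
  rw [show q - 2 - 1 = q - 3 by omega] at htop
  have hg0 : g.coeff (q - 1) = 0 := coeff_eq_zero_of_natDegree_lt (by omega)
  rw [Hmat_two_mulVec_eval hα hq]
  · simp [coeff_X_pow, htop, hg0, show q - 3 ≠ q - 1 by omega, show q - 3 ≠ q - 2 by omega,
      show q - 2 ≠ q - 1 by omega, show q - 1 ≠ q - 2 by omega]
  · refine (natDegree_add_le_of_le (natDegree_add_le_of_le (natDegree_C_mul_X_pow_le w₀ (q - 1))
      ((natDegree_C_mul_X_pow_le w₁ (q - 2)).trans (by omega : q - 2 ≤ q - 1)))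
      (hdeg.trans (by omega : q - 2 ≤ q - 1))).trans_lt (by omega)

theorem exists_eq_eval_add_of_mem_Sset (hα : Injective α) (hq : 4 ≤ q) (v : Fin q → F) :
    ∃ w₀ w₁ : F, ∃ g ∈ Sset F (q - 2) θ,
      v = fun j => (C w₀ * X ^ (q - 1) + C w₁ * X ^ (q - 2) + g).eval (α j) := by
  obtain ⟨p, hp, rfl⟩ := exists_natDegree_lt_eval_eq (by omega) hα v
  set w₀ := p.coeff (q - 1)
  set w₁ := p.coeff (q - 2) - θ * p.coeff (q - 3)
  refine ⟨w₀, w₁, p - C w₀ * X ^ (q - 1) - C w₁ * X ^ (q - 2),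
    (mem_Sset_iff (by omega)).mpr ⟨?_, ?_⟩, by simp⟩
  · refine natDegree_le_iff_coeff_eq_zero.mpr fun j hj => ?_
    rcases (show j = q - 1 ∨ q ≤ j by omega) with rfl | hj
    · simp [coeff_X_pow, w₀, show q - 1 ≠ q - 2 by omega]
    · simp [coeff_X_pow, coeff_eq_zero_of_natDegree_lt (hp.trans_le hj),
        show j ≠ q - 1 by omega, show j ≠ q - 2 by omega]
  · simp only [coeff_sub, coeff_C_mul_X_pow, show q - 2 - 1 = q - 3 by omega,
      if_neg (show q - 2 ≠ q - 1 by omega), if_neg (show q - 3 ≠ q - 1 by omega),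
      if_neg (show q - 3 ≠ q - 2 by omega), if_true, w₁]
    ring

theorem TRS_card_sub_two_eq (hα : Bijective α) (hq : 4 ≤ q) :
    TRS α (q - 2) θ = {v | Hmat 2 θ α *ᵥ v = 0} := by
  ext v
  constructor
  · rintro ⟨g, hg, rfl⟩
    have h := Hmat_two_mulVec_eval_add hα hq 0 0 hg
    simp only [map_zero, zero_mul, zero_add, neg_zero] at h
    rw [Set.mem_ofPred_eq, h]
    simp
  · intro hv
    obtain ⟨w₀, w₁, g, hg, rfl⟩ := exists_eq_eval_add_of_mem_Sset (θ := θ) hα.1 hq v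
    rw [Set.mem_ofPred_eq, Hmat_two_mulVec_eval_add hα hq w₀ w₁ hg] at hv
    obtain ⟨rfl, rfl⟩ : w₀ = 0 ∧ w₁ = 0 := by simpa using hv
    exact ⟨g, hg, by simp⟩

variable [DecidableEq F]

theorem distTo_TRS_le_two (hα : Bijective α) (hq : 4 ≤ q) (v : Fin q → F) :
    distTo v (TRS α (q - 2) θ) ≤ 2 := by
  obtain ⟨b, hb⟩ : ∃ b : F, b ∉ ({0, θ⁻¹} : Finset F) := by
    by_contra! h
    have := (Finset.card_le_card (fun x _ => h x : univ ⊆ {0, θ⁻¹})).trans Finset.card_le_two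
    rw [Finset.card_univ] at this
    omega
  obtain ⟨hb0, hbθ⟩ : b ≠ 0 ∧ b ≠ θ⁻¹ := by simpa using hb
  have ht : b - θ * b ^ 2 ≠ 0 := by
    rw [show b - θ * b ^ 2 = b * (1 - θ * b) by ring]
    exact mul_ne_zero hb0 (sub_ne_zero.mpr fun h => hbθ (eq_inv_of_mul_eq_one_right h.symm))
  obtain ⟨j₀, hj₀⟩ := hα.2 0
  obtain ⟨j₁, hj₁⟩ := hα.2 b
  rw [TRS_card_sub_two_eq hα hq, distTo_ker_le_iff]
  generalize Hmat 2 θ α *ᵥ v = s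
  refine ⟨Pi.single j₀ (s 0 - s 1 / (b - θ * b ^ 2)) + Pi.single j₁ (s 1 / (b - θ * b ^ 2)),
    (hammingNorm_add_le _ _).trans
      (add_le_add (hammingNorm_single_le_one _ _) (hammingNorm_single_le_one _ _)), ?_⟩
  rw [mulVec_add, Hmat_mulVec_single, Hmat_mulVec_single, hj₀, hj₁, crv_two, crv_two]
  generalize b - θ * b ^ 2 = t at ht ⊢
  ext i
  fin_cases i
  · simp
  · simp [ht]

theorem distTo_TRS_le_one_iff (hα : Bijective α) (hq : 4 ≤ q) (v : Fin q → F) :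
    distTo v (TRS α (q - 2) θ) ≤ 1 ↔ ∃ a x : F, Hmat 2 θ α *ᵥ v = x • crv F 2 θ a := by
  have : Nonempty (Fin q) := ⟨⟨0, by omega⟩⟩
  rw [TRS_card_sub_two_eq hα hq, distTo_ker_le_iff]
  constructor
  · rintro ⟨e, he, hHe⟩
    obtain ⟨j, x, rfl⟩ := exists_eq_single_of_hammingNorm_le_one he
    exact ⟨α j, x, by rw [← hHe, Hmat_mulVec_single]⟩
  · rintro ⟨a, x, hv⟩
    obtain ⟨j, rfl⟩ := hα.2 a
    exact ⟨Pi.single j x, hammingNorm_single_le_one j x, by rw [Hmat_mulVec_single, hv]⟩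

theorem distTo_TRS_eval_add_eq_two_iff (hα : Bijective α) (hq : 4 ≤ q) (w₀ w₁ : F) {g : F[X]}
    (hg : g ∈ Sset F (q - 2) θ) :
    distTo (fun j => (C w₀ * X ^ (q - 1) + C w₁ * X ^ (q - 2) + g).eval (α j))
        (TRS α (q - 2) θ) = 2 ↔ ¬∃ a, w₁ = w₀ * (a - θ * a ^ 2) := by
  set u := fun j => (C w₀ * X ^ (q - 1) + C w₁ * X ^ (q - 2) + g).eval (α j)
  have hle := distTo_TRS_le_two (θ := θ) hα hq u
  calc distTo u (TRS α (q - 2) θ) = 2 ↔ ¬distTo u (TRS α (q - 2) θ) ≤ 1 := by omega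
    _ ↔ ¬∃ a x : F, ![-w₀, -w₁] = x • crv F 2 θ a := by
      rw [distTo_TRS_le_one_iff hα hq, Hmat_two_mulVec_eval_add hα hq w₀ w₁ hg]
    _ ↔ ¬∃ a, w₁ = w₀ * (a - θ * a ^ 2) := by
      refine not_congr ⟨fun ⟨a, x, h⟩ => ⟨a, ?_⟩, fun ⟨a, h⟩ => ⟨a, -w₀, ?_⟩⟩
      · have h₀ := congrFun h 0
        have h₁ := congrFun h 1
        simp only [Fin.isValue, cons_val_zero, cons_val_one, cons_val_fin_one, crv_two,
          Pi.smul_apply, smul_eq_mul, mul_one] at h₀ h₁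
        linear_combination h₀ * (a - θ * a ^ 2) - h₁
      · ext i
        fin_cases i <;> simp [crv_two, h]

theorem covRad_TRS (hα : Bijective α) (hq : 4 ≤ q) : covRad (TRS α (q - 2) θ) = 2 :=
  covRad_eq_of_distTo_le (distTo_TRS_le_two hα hq)
    ((distTo_TRS_eval_add_eq_two_iff hα hq 0 1 (⟨0, by simp⟩ : (0 : F[X]) ∈ Sset F (q - 2) θ)).mpr
      (by simp))

end FullLength

end

theorem deep_holes_odd_k_eq_q_sub_two_general {F : Type*} [Field F] [Fintype F] [DecidableEq F]
    (q : ℕ) (hq : q = Fintype.card F) (hodd : Odd q) (hq16 : 16 < q)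
    (θ : F) (α : Fin q → F) (hα : Function.Bijective α) (u : Fin q → F) :
    IsDeepHole (TRS α (q - 2) θ) u ↔
      ∃ w₀ w₁ : F, ∃ g ∈ Sset F (q - 2) θ,
        (u = fun j => (Polynomial.C w₀ * Polynomial.X ^ (q - 1)
            + Polynomial.C w₁ * Polynomial.X ^ (q - 2) + g).eval (α j)) ∧
        ((w₀ = 0 ∧ w₁ ≠ 0) ∨
          (w₀ ≠ 0 ∧ w₀ ^ 2 - 4 * w₀ * w₁ * θ ≠ 0 ∧
            ¬ IsSquare (w₀ ^ 2 - 4 * w₀ * w₁ * θ))) := by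
  subst hq
  have hq4 : 4 ≤ Fintype.card F := by omega
  have h2 : (2 : F) ≠ 0 := Ring.two_ne_zero fun hchar => by
    have := FiniteField.even_card_of_char_two hchar
    rw [Nat.odd_iff] at hodd
    omega
  rw [IsDeepHole, covRad_TRS hα hq4]
  constructor
  · intro hu
    obtain ⟨w₀, w₁, g, hg, rfl⟩ := exists_eq_eval_add_of_mem_Sset (θ := θ) hα.1 hq4 u
    exact ⟨w₀, w₁, g, hg, rfl, (not_exists_eq_mul_sub_mul_sq_iff h2 w₀ w₁ θ).mp
      ((distTo_TRS_eval_add_eq_two_iff hα hq4 w₀ w₁ hg).mp hu)⟩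
  · rintro ⟨w₀, w₁, g, hg, rfl, hw⟩
    exact (distTo_TRS_eval_add_eq_two_iff hα hq4 w₀ w₁ hg).mpr
      ((not_exists_eq_mul_sub_mul_sq_iff h2 w₀ w₁ θ).mpr hw)

/-- Let `q` be odd, `q > 16`, `k = q - 2`. Then `u ∈ 𝔽_q^q` is a deep hole
of `TRS_{q-2}(𝔽_q, θ)` iff `u = u_f` for some `f(x) = w_0 x^{q-1} + w_1 x^{q-2} + g(x)` with
`g ∈ S_{q-2,θ}` and either `w_0 = 0 ∧ w_1 ≠ 0`, or `w_0 ≠ 0` and `w_0² - 4 w_0 w_1 θ` is a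
nonzero non-square in `𝔽_q`. -/
theorem deep_holes_odd_k_eq_q_sub_two {F : Type*} [Field F] [Fintype F] [DecidableEq F]
    (q : ℕ) (hq : q = Fintype.card F) (hodd : Odd q) (hq16 : 16 < q)
    (θ : F) (hθ : θ ≠ 0) (α : Fin q → F) (hα : Function.Bijective α) (u : Fin q → F) :
    IsDeepHole (TRS α (q - 2) θ) u ↔
      ∃ w₀ w₁ : F, ∃ g ∈ Sset F (q - 2) θ,
        (u = fun j => (Polynomial.C w₀ * Polynomial.X ^ (q - 1)
            + Polynomial.C w₁ * Polynomial.X ^ (q - 2) + g).eval (α j)) ∧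
        ((w₀ = 0 ∧ w₁ ≠ 0) ∨
          (w₀ ≠ 0 ∧ w₀ ^ 2 - 4 * w₀ * w₁ * θ ≠ 0 ∧
            ¬ IsSquare (w₀ ^ 2 - 4 * w₀ * w₁ * θ))) :=
  deep_holes_odd_k_eq_q_sub_two_general q hq hodd hq16 θ α hα u
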